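/- Let sn(r) = sin(r), cs(r) = cos(r), A(r) = ∫₀^r sin(t)^(k-1) dt, and a(r) := k·(A(r)/A'(r))·cot(r). Then 0 ≤ a(r) ≤ 1 for all r ∈ (0, π/2). -/
import Mathlib


open Real

/-- `A(r) = ∫₀^r sin(t)^(k-1) dt` in the spherical case. -/
noncomputable def Afun (k : ℕ) (r : ℝ) : ℝ := ∫ t in (0:ℝ)..r, Real.sin t ^ (k - 1)

/-- in the spherical case, `0 ≤ a(r) ≤ 1` for `r ∈ (0, π/2)`,
where `a(r) := k·(A(r)/A'(r))·cot(r)` and `A'(r) = sin(r)^(k-1)`. -/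
theorem stmt3 (k : ℕ) (hk : 1 ≤ k) :
    ∀ r : ℝ, 0 < r → r < Real.pi / 2 →
      0 ≤ (k : ℝ) * (Afun k r / Real.sin r ^ (k - 1)) * (Real.cos r / Real.sin r) ∧
      (k : ℝ) * (Afun k r / Real.sin r ^ (k - 1)) * (Real.cos r / Real.sin r) ≤ 1 := by
  intro r hr hr2
  have hpi := Real.pi_pos
  have hrπ : r < Real.pi := by linarith
  have hs : 0 < Real.sin r := Real.sin_pos_of_pos_of_lt_pi hr hrπ
  have hc : 0 < Real.cos r := Real.cos_pos_of_mem_Ioo ⟨by linarith, hr2⟩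
  have hA : 0 ≤ Afun k r := by
    apply intervalIntegral.integral_nonneg (le_of_lt hr)
    intro t ht
    exact pow_nonneg (Real.sin_nonneg_of_nonneg_of_le_pi ht.1 (by linarith [ht.2])) _
  have hspow : 0 < Real.sin r ^ (k - 1) := pow_pos hs _
  constructor
  · positivity
  · -- key: k * A r * cos r ≤ sin r ^ k
    have hint1 : IntervalIntegrable (fun t => (k:ℝ) * Real.sin t ^ (k-1) * Real.cos r)
        MeasureTheory.volume 0 r := (Continuous.intervalIntegrable (by continuity) _ _)
    have hint2 : IntervalIntegrable (fun t => (k:ℝ) * Real.sin t ^ (k-1) * Real.cos t)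
        MeasureTheory.volume 0 r := (Continuous.intervalIntegrable (by continuity) _ _)
    have hmono : (∫ t in (0:ℝ)..r, (k:ℝ) * Real.sin t ^ (k-1) * Real.cos r)
        ≤ ∫ t in (0:ℝ)..r, (k:ℝ) * Real.sin t ^ (k-1) * Real.cos t := by
      apply intervalIntegral.integral_mono_on (le_of_lt hr) hint1 hint2
      intro t ht
      have hsn : 0 ≤ Real.sin t ^ (k-1) :=
        pow_nonneg (Real.sin_nonneg_of_nonneg_of_le_pi ht.1 (by linarith [ht.2])) _
      have hcc : Real.cos r ≤ Real.cos t := by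
        apply Real.cos_le_cos_of_nonneg_of_le_pi ht.1 (by linarith) ht.2
      exact mul_le_mul_of_nonneg_left hcc (by positivity)
    have heq2 : (∫ t in (0:ℝ)..r, (k:ℝ) * Real.sin t ^ (k-1) * Real.cos t)
        = Real.sin r ^ k := by
      have := intervalIntegral.integral_eq_sub_of_hasDerivAt
        (f := fun x => Real.sin x ^ k)
        (f' := fun x => (k:ℝ) * Real.sin x ^ (k-1) * Real.cos x)
        (a := 0) (b := r)
        (fun x _ => (Real.hasDerivAt_sin x).pow k) hint2
      rw [this]
      norm_num [Real.sin_zero, zero_pow (show k ≠ 0 by omega)]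
    have heq1 : (∫ t in (0:ℝ)..r, (k:ℝ) * Real.sin t ^ (k-1) * Real.cos r)
        = (k:ℝ) * Afun k r * Real.cos r := by
      simp only [intervalIntegral.integral_mul_const, intervalIntegral.integral_const_mul]
      rw [Afun]
    have hkey : (k:ℝ) * Afun k r * Real.cos r ≤ Real.sin r ^ k := by
      rw [← heq1, ← heq2]; exact hmono
    have hpowk : Real.sin r ^ (k-1) * Real.sin r = Real.sin r ^ k := by
      rw [← pow_succ]; congr 1; omega
    have hform : (k:ℝ) * (Afun k r / Real.sin r ^ (k-1)) * (Real.cos r / Real.sin r)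
        = ((k:ℝ) * Afun k r * Real.cos r) / (Real.sin r ^ (k-1) * Real.sin r) := by
      field_simp
    rw [hform, div_le_one (by positivity), hpowk]
    exact hkey
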